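/- arXiv:1912.02176 — 2 statements merged into one kernel-verified Lean document; each statement's English description precedes it below -/
import Mathlib

section
/- For a binary word x of length n, define the balance f(x) = (number of 0s in x) - (number of 1s in x). A word x of length n is in Dyck_k (well-parenthesized with depth at most k, where 0 is an opening and 1 a closing parenthesis) if and only if: f(x[0,i]) ≥ 0 for all i < n, f(x) = 0, and f(x[0,i]) ≤ k for all i < n. Theorem: x ∈ Dyck_k if and only if the word x' = 1^k · x · 0^k contains no substring x'[i,j] with f(x'[i,j]) = k+1 or f(x'[i,j]) = -(k+1). -/
/-- balance: number of 0s (opens, `false`) minus number of 1s (closes, `true`) -/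
def bal (u : List Bool) : ℤ := (u.count false : ℤ) - (u.count true : ℤ)

/-- substring x[i,j] (inclusive) -/
def sub (x : List Bool) (i j : ℕ) : List Bool := (x.drop i).take (j - i + 1)

/-- membership in Dyck_k: all prefix balances in [0,k] and total balance 0 -/
def IsDyck (k : ℕ) (x : List Bool) : Prop :=
  (∀ i < x.length, 0 ≤ bal (x.take (i + 1)) ∧ bal (x.take (i + 1)) ≤ (k : ℤ)) ∧ bal x = 0

lemma myBal_append (u v : List Bool) : bal (u ++ v) = bal u + bal v := by
  simp [bal, List.count_append]; ring

lemma myBal_repT (m : ℕ) : bal (List.replicate m true) = -(m : ℤ) := by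
  simp [bal, List.count_replicate]

lemma myBal_repF (m : ℕ) : bal (List.replicate m false) = (m : ℤ) := by
  simp [bal, List.count_replicate]

lemma myBal_sub (y : List Bool) (i j : ℕ) (h : i ≤ j) :
    bal (sub y i j) = bal (y.take (j + 1)) - bal (y.take i) := by
  have h1 : j + 1 = i + (j - i + 1) := by omega
  rw [h1, List.take_add, myBal_append, sub]
  ring

set_option linter.unnecessarySeqFocus false in
lemma myB_step (y : List Bool) (t : ℕ) :
    bal (y.take (t + 1)) ≤ bal (y.take t) + 1 ∧
      bal (y.take t) ≤ bal (y.take (t + 1)) + 1 := by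
  rw [List.take_succ, myBal_append]
  rcases h : y[t]? with _ | b
  · simp [bal]
  · rcases b <;> simp [bal] <;> omega

lemma myIvt (g : ℕ → ℤ) (hstep : ∀ t, g (t + 1) ≤ g t + 1) :
    ∀ b a, a ≤ b → ∀ c, g a ≤ c → c ≤ g b → ∃ t, a ≤ t ∧ t ≤ b ∧ g t = c := by
  intro b
  induction b with
  | zero =>
    intro a ha c h1 h2
    have haz : a = 0 := by omega
    subst haz
    exact ⟨0, le_rfl, le_rfl, by omega⟩
  | succ b ih =>
    intro a ha c h1 h2
    rcases Nat.lt_or_ge a (b + 1) with h | h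
    · rcases le_or_gt c (g b) with hc | hc
      · obtain ⟨t, ht1, ht2, ht3⟩ := ih a (by omega) c h1 hc
        exact ⟨t, ht1, by omega, ht3⟩
      · have := hstep b
        exact ⟨b + 1, by omega, le_rfl, by omega⟩
    · have haz : a = b + 1 := by omega
      subst haz
      exact ⟨b + 1, le_rfl, le_rfl, by omega⟩

lemma myB_formula (k : ℕ) (x : List Bool) (t : ℕ) :
    bal ((List.replicate k true ++ x ++ List.replicate k false).take t)
      = -((min t k : ℕ) : ℤ) + bal (x.take (t - k)) + ((min (t - k - x.length) k : ℕ) : ℤ) := by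
  rw [List.append_assoc, List.take_append, List.take_append,
    myBal_append, myBal_append, List.take_replicate, List.take_replicate, myBal_repT,
    myBal_repF, List.length_replicate]
  ring

lemma dyck_bound (k : ℕ) (x : List Bool) (h : IsDyck k x) (s : ℕ) :
    0 ≤ bal (x.take s) ∧ bal (x.take s) ≤ (k : ℤ) := by
  rcases s with _ | s
  · simp [bal]
  · rcases Nat.lt_or_ge s x.length with hs | hs
    · exact h.1 s hs
    · rw [List.take_of_length_le (by omega)]
      rw [h.2]
      simp

theorem stmt0 (k : ℕ) (x : List Bool) :
    IsDyck k x ↔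
      (∀ i j : ℕ, i ≤ j →
        j < (List.replicate k true ++ x ++ List.replicate k false).length →
        bal (sub (List.replicate k true ++ x ++ List.replicate k false) i j) ≠ (k : ℤ) + 1 ∧
        bal (sub (List.replicate k true ++ x ++ List.replicate k false) i j) ≠ -((k : ℤ) + 1)) := by
  set y := List.replicate k true ++ x ++ List.replicate k false with hy
  have hN : y.length = k + x.length + k := by simp [hy]; omega
  constructor
  · intro h i j hij hjN
    have hb := myBal_sub y i j hij
    have hbound : ∀ t, -(k : ℤ) ≤ bal (y.take t) ∧ bal (y.take t) ≤ 0 := by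
      intro t
      have hf := myB_formula k x t
      rw [← hy] at hf
      rcases Nat.lt_or_ge t k with ht | ht
      · have e1 : min t k = t := by omega
        have e3 : t - k - x.length = 0 := by omega
        have e2 : t - k = 0 := by omega
        rw [e1, e3, e2] at hf
        simp only [List.take_zero, Nat.zero_min, Nat.cast_zero, add_zero] at hf
        have hnil : bal ([] : List Bool) = 0 := by simp [bal]
        rw [hnil] at hf
        omega
      · rcases Nat.lt_or_ge t (k + x.length) with ht2 | ht2
        · have e1 : min t k = k := by omega
          have e3 : t - k - x.length = 0 := by omega
          rw [e1, e3] at hf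
          have hd := dyck_bound k x h (t - k)
          simp at hf
          omega
        · have e1 : min t k = k := by omega
          have e2 : x.take (t - k) = x := List.take_of_length_le (by omega)
          rw [e1, e2, h.2] at hf
          have hm1 : (0 : ℤ) ≤ ((min (t - k - x.length) k : ℕ) : ℤ) := by positivity
          have hm2 : ((min (t - k - x.length) k : ℕ) : ℤ) ≤ (k : ℤ) := by
            exact_mod_cast Nat.min_le_right _ _
          omega
    have h1 := hbound (j + 1)
    have h2 := hbound i
    omega
  · intro H
    have hstep : ∀ t, bal (y.take (t + 1)) ≤ bal (y.take t) + 1 ∧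
        bal (y.take t) ≤ bal (y.take (t + 1)) + 1 := myB_step y
    have D : ∀ i t, i ≤ t → t ≤ y.length →
        bal (y.take t) - bal (y.take i) ≤ (k : ℤ) := by
      intro i t hit htN
      by_contra hc
      push_neg at hc
      obtain ⟨t', ht1, ht2, ht3⟩ := myIvt (fun s => bal (y.take s)) (fun s => (hstep s).1)
        t i hit (bal (y.take i) + ((k : ℤ) + 1))
        (show bal (y.take i) ≤ _ by omega)
        (show _ ≤ bal (y.take t) by omega)
      have htne : i < t' := by
        rcases Nat.lt_or_ge i t' with h | h
        · exact h
        · have : t' = i := by omega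
          rw [this] at ht3; omega
      have hsub := myBal_sub y i (t' - 1) (by omega)
      have e : t' - 1 + 1 = t' := by omega
      rw [e, ht3] at hsub
      have := (H i (t' - 1) (by omega) (by omega)).1
      omega
    have D' : ∀ i t, i ≤ t → t ≤ y.length →
        bal (y.take i) - bal (y.take t) ≤ (k : ℤ) := by
      intro i t hit htN
      by_contra hc
      push_neg at hc
      obtain ⟨t', ht1, ht2, ht3⟩ := myIvt (fun s => -bal (y.take s))
        (fun s => show -bal (y.take (s + 1)) ≤ -bal (y.take s) + 1 by
          have := (hstep s).2; omega)
        t i hit (-bal (y.take i) + ((k : ℤ) + 1))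
        (show -bal (y.take i) ≤ _ by omega)
        (show _ ≤ -bal (y.take t) by omega)
      have htne : i < t' := by
        rcases Nat.lt_or_ge i t' with h | h
        · exact h
        · have : t' = i := by omega
          rw [this] at ht3; omega
      have hsub := myBal_sub y i (t' - 1) (by omega)
      have e : t' - 1 + 1 = t' := by omega
      rw [e] at hsub
      have := (H i (t' - 1) (by omega) (by omega)).2
      omega
    have hB0 : bal (y.take 0) = 0 := by simp [bal]
    have hBk : bal (y.take k) = -(k : ℤ) := by
      have hf := myB_formula k x k
      rw [← hy] at hf
      have e1 : min k k = k := by omega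
      have e3 : k - k - x.length = 0 := by omega
      have e2 : k - k = 0 := by omega
      rw [e1, e3, e2] at hf
      simpa [bal] using hf
    have hBkn : bal (y.take (k + x.length)) = -(k : ℤ) + bal x := by
      have hf := myB_formula k x (k + x.length)
      rw [← hy] at hf
      have e1 : min (k + x.length) k = k := by omega
      have e2 : x.take (k + x.length - k) = x := List.take_of_length_le (by omega)
      have e3 : k + x.length - k - x.length = 0 := by omega
      rw [e1, e3, e2] at hf
      simpa using hf
    have hBN : bal (y.take y.length) = bal x := by
      rw [List.take_length, hy, myBal_append, myBal_append, myBal_repT, myBal_repF]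
      ring
    have hx0 : bal x = 0 := by
      have h1 := D k y.length (by omega) le_rfl
      have h2 := D' 0 (k + x.length) (by omega) (by omega)
      rw [hBN, hBk] at h1
      rw [hB0, hBkn] at h2
      omega
    refine ⟨fun i hi => ?_, hx0⟩
    have hf := myB_formula k x (k + i + 1)
    rw [← hy] at hf
    have e1 : min (k + i + 1) k = k := by omega
    have e2 : k + i + 1 - k = i + 1 := by omega
    have e3 : k + i + 1 - k - x.length = 0 := by omega
    rw [e1, e3, e2] at hf
    simp only [Nat.zero_min, Nat.cast_zero, add_zero] at hf
    have hu := D k (k + i + 1) (by omega) (by omega)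
    have hl := D (k + i + 1) y.length (by omega) le_rfl
    rw [hBk] at hu
    rw [hBN, hx0] at hl
    omega
end

section
/- Let x be a binary word with balance f. Fix k ≥ 2 and suppose x[i,j] is a minimal substring with f(x[i,j]) = k (respectively -k). Then there exist indices i ≤ p ≤ j and i ≤ q ≤ j with f(x[i,p]) = k-1 and f(x[q,j]) = k-1 (respectively both equal to -(k-1)); that is, every minimal k-substring is the union of two (k-1)-substrings of the same sign, one sharing its left endpoint and one sharing its right endpoint. -/
def IsSub (x : List Bool) (i j : ℕ) (t : ℤ) : Prop :=
  i ≤ j ∧ j < x.length ∧ bal (sub x i j) = t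

def MinimalSub (x : List Bool) (i j : ℕ) (t : ℤ) : Prop :=
  IsSub x i j t ∧
    ∀ i' j' : ℕ, i ≤ i' → i' ≤ j' → j' ≤ j → (i', j') ≠ (i, j) → bal (sub x i' j') ≠ t

lemma bal_append (a b : List Bool) : bal (a ++ b) = bal a + bal b := by
  simp [bal, List.count_append]; ring

lemma bal_single (c : Bool) : bal [c] = 1 ∨ bal [c] = -1 := by
  cases c <;> simp [bal]

lemma sub_succ (x : List Bool) (i n : ℕ) (hi : i ≤ n) (hn : n + 1 < x.length) :
    sub x i (n+1) = sub x i n ++ [x[n+1]] := by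
  unfold sub
  have h1 : n + 1 - i + 1 = (n - i + 1) + 1 := by omega
  rw [h1, List.take_succ]
  congr 1
  rw [List.getElem?_drop]
  have h2 : i + (n - i + 1) = n + 1 := by omega
  rw [h2, List.getElem?_eq_getElem hn]
  rfl

lemma sub_cons (x : List Bool) (q j : ℕ) (hq : q < j) (hj : j < x.length) :
    sub x q j = x[q]'(by omega) :: sub x (q+1) j := by
  unfold sub
  rw [List.drop_eq_getElem_cons (show q < x.length by omega)]
  have h : j - q + 1 = (j - (q+1) + 1) + 1 := by omega
  rw [h, List.take_succ_cons]

lemma sub_diag (x : List Bool) (i : ℕ) (hi : i < x.length) : sub x i i = [x[i]] := by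
  unfold sub
  have h : i - i + 1 = 1 := by omega
  rw [h, List.drop_eq_getElem_cons hi, List.take_succ_cons, List.take_zero]

lemma ivt (g : ℕ → ℤ) (t : ℤ) : ∀ b a : ℕ, a ≤ b →
    (∀ n, a ≤ n → n < b → |g (n+1) - g n| ≤ 1) →
    g a ≤ t → t ≤ g b → ∃ c, a ≤ c ∧ c ≤ b ∧ g c = t := by
  intro b
  induction b with
  | zero =>
    intro a ha _ h1 h2
    have : a = 0 := by omega
    subst this
    exact ⟨0, le_refl _, le_refl _, le_antisymm h1 h2⟩
  | succ b ih =>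
    intro a ha hstep h1 h2
    by_cases hab : a = b + 1
    · subst hab
      exact ⟨b+1, le_refl _, le_refl _, le_antisymm h1 h2⟩
    · have ha' : a ≤ b := by omega
      by_cases ht : t ≤ g b
      · obtain ⟨c, hc1, hc2, hc3⟩ := ih a ha' (fun n hn hn' => hstep n hn (by omega)) h1 ht
        exact ⟨c, hc1, by omega, hc3⟩
      · push_neg at ht
        have habs := abs_le.mp (hstep b ha' (by omega))
        exact ⟨b+1, by omega, le_refl _, by omega⟩

theorem stmt3 (x : List Bool) (k : ℤ) (hk : 2 ≤ k) (s : ℤ) (hs : s = 1 ∨ s = -1)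
    (i j : ℕ) (h : MinimalSub x i j (s * k)) :
    ∃ p q : ℕ, i ≤ p ∧ p ≤ j ∧ i ≤ q ∧ q ≤ j ∧
      bal (sub x i p) = s * (k - 1) ∧ bal (sub x q j) = s * (k - 1) := by
  obtain ⟨⟨hij, hjlen, hbal⟩, -⟩ := h
  have hs2 : s * s = 1 := by rcases hs with h|h <;> simp [h]
  have habs : |s| = 1 := by rcases hs with h|h <;> simp [h]
  have hilen : i < x.length := by omega
  -- prefix
  obtain ⟨p, hip, hpj, hgp⟩ := ivt (fun p => s * bal (sub x i p)) (k-1) j i hij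
    (by
      intro n hn hn'
      have hsx := sub_succ x i n hn (by omega)
      have : s * bal (sub x i (n+1)) - s * bal (sub x i n) = s * bal [x[n+1]] := by
        rw [hsx, bal_append]; ring
      simp only [this, abs_mul, habs, one_mul]
      rcases bal_single (x[n+1]'(by omega)) with h|h <;> simp [h])
    (by
      show s * bal (sub x i i) ≤ k - 1
      rw [sub_diag x i hilen]
      rcases hs with h|h <;> rcases bal_single (x[i]'hilen) with h'|h' <;>
        rw [h, h'] <;> omega)
    (by show k - 1 ≤ s * bal (sub x i j); rw [hbal]; nlinarith)
  have hp : bal (sub x i p) = s * (k - 1) := by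
    have : s * (s * bal (sub x i p)) = s * (k - 1) := by rw [hgp]
    rwa [← mul_assoc, hs2, one_mul] at this
  -- suffix
  obtain ⟨r, -, hrji, hgr⟩ := ivt (fun r => s * bal (sub x (j - r) j)) (k-1) (j-i) 0
    (Nat.zero_le _)
    (by
      intro n hn0 hn
      have hq : j - (n+1) < j := by omega
      have hsx := sub_cons x (j - (n+1)) j hq hjlen
      have hjn : j - (n+1) + 1 = j - n := by omega
      rw [hjn] at hsx
      have hc : bal (sub x (j-(n+1)) j) = bal [x[j-(n+1)]'(by omega)] + bal (sub x (j-n) j) := by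
        rw [hsx]
        rw [show (x[j-(n+1)]'(by omega) :: sub x (j-n) j) = [x[j-(n+1)]'(by omega)] ++ sub x (j-n) j from rfl, bal_append]
      have : s * bal (sub x (j-(n+1)) j) - s * bal (sub x (j-n) j) = s * bal [x[j-(n+1)]'(by omega)] := by
        rw [hc]; ring
      simp only [this, abs_mul, habs, one_mul]
      rcases bal_single (x[j-(n+1)]'(by omega)) with h|h <;> simp [h])
    (by
      show s * bal (sub x (j - 0) j) ≤ k - 1
      rw [Nat.sub_zero, sub_diag x j hjlen]
      rcases hs with h|h <;> rcases bal_single (x[j]'hjlen) with h'|h' <;>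
        rw [h, h'] <;> omega)
    (by
      show k - 1 ≤ s * bal (sub x (j - (j - i)) j)
      have hji : j - (j - i) = i := by omega
      rw [hji, hbal]; nlinarith)
  refine ⟨p, j - r, hip, hpj, by omega, by omega, hp, ?_⟩
  have : s * (s * bal (sub x (j - r) j)) = s * (k - 1) := by rw [hgr]
  rwa [← mul_assoc, hs2, one_mul] at this
end
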